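/- Let s_0 = 1, s_1, …, s_{L−1}, s_L = 1 be a cycle of states in S with p_{s_{i−1} s_i} = p*_{s_i} for every i = 1,…,L, and fix ε ∈ (0,1). Let n ≥ 1 and suppose the observations satisfy x_{t+jL+i} ∈ X_{s_i} for all j = 0,…,n−1 and i = 1,…,L−1, and x_{t+jL} ∈ X_1 for all j = 1,…,n. Then for all i, j ∈ S: p^{(nL−1)}_{ij}(t) f_j(x_{t+nL}) ≤ p^{(nL−1)}_{11}(t) f_1(x_{t+nL}). -/
import Mathlib


open Finset MeasureTheory

namespace ViterbiHMM

/-- The state space `S = {1,…,K'}` with `K' = K+2 > 1` states. -/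
abbrev S (K : ℕ) := Fin (K + 2)

/-- The observation space `X = ℝ^D`. -/
abbrev Obs (D : ℕ) := Fin D → ℝ

variable {K D : ℕ}

/-- Maximum over all states. -/
noncomputable def smax (g : S K → ℝ) : ℝ :=
  Finset.univ.sup' Finset.univ_nonempty g

/-- `p*_l = max_{j ∈ S} p_{j l}`. -/
noncomputable def pstar (p : S K → S K → ℝ) (l : S K) : ℝ :=
  smax fun j => p j l

/-- The likelihood `Λ(q_{1:n}; x_{1:n})` of the path `q` (at times `1,…,n`),
with initial distribution `ppi`, transition matrix `p`, emission densities `f`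
and observations `x` (1-based). -/
noncomputable def lik (ppi : S K → ℝ) (p : S K → S K → ℝ) (f : S K → Obs D → ℝ)
    (x : ℕ → Obs D) (n : ℕ) (q : ℕ → S K) : ℝ :=
  ppi (q 1) * f (q 1) (x 1) *
    ∏ i ∈ Finset.Icc 2 n, (p (q (i - 1)) (q i) * f (q i) (x i))

/-- The scores `δ_u(l)`, via the Viterbi recursion. -/
noncomputable def score (ppi : S K → ℝ) (p : S K → S K → ℝ) (f : S K → Obs D → ℝ)
    (x : ℕ → Obs D) : ℕ → S K → ℝ
  | 0, l => ppi l
  | 1, l => ppi l * f l (x 1)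
  | (u + 2), l => smax (fun i => score ppi p f x (u + 1) i * p i l) * f l (x (u + 2))

/-- `p^{(r)}_{ij}(u)`, the maximal partial likelihood of paths from `i` (at time `u`)
to `j` (at time `u+r+1`). -/
noncomputable def plik (p : S K → S K → ℝ) (f : S K → Obs D → ℝ) (x : ℕ → Obs D) :
    ℕ → ℕ → S K → S K → ℝ
  | _, 0, i, j => p i j
  | u, (r + 1), i, j => smax fun c => plik p f x u r i c * f c (x (u + r + 1)) * p c j

/-- Given `x_{1:u+r}`, the observation `x_u` is an `l`-node of order `r`. -/
def IsNode (ppi : S K → ℝ) (p : S K → S K → ℝ) (f : S K → Obs D → ℝ)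
    (x : ℕ → Obs D) (u r : ℕ) (l : S K) : Prop :=
  ∀ i j : S K, score ppi p f x u i * plik p f x u r i j ≤
    score ppi p f x u l * plik p f x u r l j

/-- A block `b_{1:k}` is an `l`-barrier of order `r` and length `k`: however it is
prefixed, the observation at position `w + k - r` of the concatenation is an `l`-node
of order `r`. -/
def IsBarrier (ppi : S K → ℝ) (p : S K → S K → ℝ) (f : S K → Obs D → ℝ)
    (b : ℕ → Obs D) (k r : ℕ) (l : S K) : Prop :=
  ∀ w : ℕ, 1 ≤ w → ∀ x' : ℕ → Obs D,
    IsNode ppi p f (fun i => if i ≤ w then x' i else b (i - w)) (w + k - r) r l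

/-- The set `V(x_{1:n})` of Viterbi alignments (maximizers of the likelihood);
a path is a function `ℕ → S` used at times `1,…,n`. -/
def Vset (ppi : S K → ℝ) (p : S K → S K → ℝ) (f : S K → Obs D → ℝ)
    (x : ℕ → Obs D) (n : ℕ) : Set (ℕ → S K) :=
  {v | ∀ w : ℕ → S K, lik ppi p f x n w ≤ lik ppi p f x n v}

/-- The set `W^l(x_{1:n})` of maximizers of the likelihood among paths ending in `l`. -/
def Wset (ppi : S K → ℝ) (p : S K → S K → ℝ) (f : S K → Obs D → ℝ)
    (x : ℕ → Obs D) (n : ℕ) (l : S K) : Set (ℕ → S K) :=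
  {v | v n = l ∧ ∀ w : ℕ → S K, w n = l → lik ppi p f x n w ≤ lik ppi p f x n v}

/-- The support `G_i = {x : f_i(x) > 0}`. -/
def G (f : S K → Obs D → ℝ) (i : S K) : Set (Obs D) := {x | 0 < f i x}

/-- `C` is a cluster: the intersection of the supports of the emission densities over `C`
has positive probability under every `P_j`, `j ∈ C`, and zero probability under every
`P_j`, `j ∉ C`. -/
def IsCluster (Pm : S K → Measure (Obs D)) (f : S K → Obs D → ℝ) (C : Finset (S K)) : Prop :=
  C.Nonempty ∧ (∀ j ∈ C, 0 < Pm j (⋂ i ∈ C, G f i)) ∧ (∀ j ∉ C, Pm j (⋂ i ∈ C, G f i) = 0)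

/-- The set `X_l = {x : max_{i ≠ l} p*_i f_i(x) < (1-ε) p*_l f_l(x)}`. -/
def Xl (p : S K → S K → ℝ) (f : S K → Obs D → ℝ) (ε : ℝ) (l : S K) : Set (Obs D) :=
  {x | ∀ i : S K, i ≠ l → pstar p i * f i x < (1 - ε) * (pstar p l * f l x)}

/-- `mpp r i j` is the maximal probability of a path from `i` to `j` with `r`
intermediate states (so `q*_{ij} = mpp (m-1) i j`). -/
noncomputable def mpp (p : S K → S K → ℝ) : ℕ → S K → S K → ℝ
  | 0, i, j => p i j
  | (r + 1), i, j => smax fun c => mpp p r i c * p c j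

/-- The substochastic matrix `Q = (p_{ij})_{i,j ∈ C}`. -/
def Qmat (p : S K → S K → ℝ) (C : Finset (S K)) : Matrix {i // i ∈ C} {i // i ∈ C} ℝ :=
  Matrix.of fun i j => p i.1 j.1


lemma smax_le' {g : S K → ℝ} {a : ℝ} (h : ∀ i, g i ≤ a) : smax g ≤ a :=
  Finset.sup'_le _ _ fun i _ => h i

lemma le_smax' (g : S K → ℝ) (i : S K) : g i ≤ smax g :=
  Finset.le_sup' g (Finset.mem_univ i)

lemma plik_nonneg' (p : S K → S K → ℝ) (f : S K → Obs D → ℝ) (x : ℕ → Obs D)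
    (hp0 : ∀ i j, 0 ≤ p i j) (hf0 : ∀ l y, 0 ≤ f l y) :
    ∀ r u i j, 0 ≤ plik p f x u r i j := by
  intro r
  induction r with
  | zero => intro u i j; exact hp0 i j
  | succ r ih =>
    intro u i j
    refine le_trans ?_ (le_smax' (fun c => plik p f x u r i c * f c (x (u + r + 1)) * p c j) i)
    exact mul_nonneg (mul_nonneg (ih u i i) (hf0 _ _)) (hp0 _ _)

/-- claim (liim)/(pulk): over `n` consecutive maximal-transition cycles
with matching observations, `p^{(nL-1)}_{ij}(t) f_j(x_{t+nL}) ≤ p^{(nL-1)}_{11}(t) f_1(x_{t+nL})`. -/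
theorem plik_cycle_bound {K D : ℕ} (p : S K → S K → ℝ) (f : S K → Obs D → ℝ)
    (x : ℕ → Obs D)
    (hp0 : ∀ i j, 0 ≤ p i j) (hf0 : ∀ l y, 0 ≤ f l y) (hpstar : ∀ l, 0 < pstar p l)
    (st1 : S K) (L : ℕ) (hL : 1 ≤ L) (s : ℕ → S K)
    (hs0 : s 0 = st1) (hsL : s L = st1)
    (hcyc : ∀ i ∈ Finset.Icc 1 L, p (s (i - 1)) (s i) = pstar p (s i))
    (ε : ℝ) (hε : 0 < ε) (hε1 : ε < 1)
    (t n : ℕ) (hn : 1 ≤ n)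
    (hobs1 : ∀ j < n, ∀ i ∈ Finset.Icc 1 (L - 1), x (t + j * L + i) ∈ Xl p f ε (s i))
    (hobs2 : ∀ j ∈ Finset.Icc 1 n, x (t + j * L) ∈ Xl p f ε st1) :
    ∀ i j : S K, plik p f x t (n * L - 1) i j * f j (x (t + n * L)) ≤
      plik p f x t (n * L - 1) st1 st1 * f st1 (x (t + n * L)) := by
  have hL0 : 0 < L := hL
  set σ : ℕ → S K := fun m => s (m % L) with hσdef
  have hσ0 : σ 0 = st1 := by simp [σ, hs0]
  -- the cycle step property, periodically extended
  have hmodsucc : ∀ m : ℕ, (m + 1) % L = (m % L + 1) % L := by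
    intro m
    conv_lhs => rw [← Nat.div_add_mod m L]
    rw [add_assoc, Nat.mul_add_mod]
  have hstep : ∀ m : ℕ, p (σ m) (σ (m + 1)) = pstar p (σ (m + 1)) := by
    intro m
    have hlt : m % L < L := Nat.mod_lt m hL0
    have hmem : m % L + 1 ∈ Finset.Icc 1 L := by
      rw [Finset.mem_Icc]; omega
    have hc := hcyc (m % L + 1) hmem
    simp only [Nat.add_sub_cancel] at hc
    have hσs : σ (m + 1) = s (m % L + 1) := by
      show s ((m + 1) % L) = s (m % L + 1)
      rw [hmodsucc m]
      by_cases h : m % L + 1 = L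
      · rw [h, Nat.mod_self, hs0, hsL]
      · rw [Nat.mod_eq_of_lt (by omega)]
    rw [hσs]; exact hc
  -- the observation bound
  have hobsB : ∀ m : ℕ, 1 ≤ m → m ≤ n * L → ∀ c : S K,
      pstar p c * f c (x (t + m)) ≤ pstar p (σ m) * f (σ m) (x (t + m)) := by
    intro m h1 h2 c
    have hx : x (t + m) ∈ Xl p f ε (σ m) := by
      by_cases h0 : m % L = 0
      · have hdvd : L ∣ m := Nat.dvd_of_mod_eq_zero h0
        have hm : m / L * L = m := Nat.div_mul_cancel hdvd
        have hj1 : 1 ≤ m / L := by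
          rcases Nat.eq_zero_or_pos (m / L) with h | h
          · rw [h] at hm; omega
          · exact h
        have hjn : m / L ≤ n := by
          by_contra h
          push_neg at h
          have : n * L < m / L * L := by
            exact (Nat.mul_lt_mul_right hL0).mpr h
          omega
        have h2' := hobs2 (m / L) (by rw [Finset.mem_Icc]; exact ⟨hj1, hjn⟩)
        rw [hm] at h2'
        have : σ m = st1 := by show s (m % L) = st1; rw [h0, hs0]
        rw [this]; exact h2'
      · have hlt : m % L < L := Nat.mod_lt m hL0
        have hmlt : m < n * L := by
          rcases lt_or_eq_of_le h2 with h | h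
          · exact h
          · exfalso; apply h0; rw [h, Nat.mul_mod_left]
        have hjn : m / L < n := Nat.div_lt_of_lt_mul (by rw [mul_comm]; exact hmlt)
        have h1' := hobs1 (m / L) hjn (m % L)
          (by rw [Finset.mem_Icc]; omega)
        have heq : t + m / L * L + m % L = t + m := by
          have := Nat.div_add_mod m L
          rw [mul_comm] at this
          omega
        rw [heq] at h1'
        exact h1'
    by_cases hc : c = σ m
    · rw [hc]
    · have hlt := hx c hc
      have hnn : 0 ≤ pstar p (σ m) * f (σ m) (x (t + m)) :=
        mul_nonneg (hpstar _).le (hf0 _ _)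
      nlinarith
  set g : ℕ → ℝ := fun m => pstar p (σ m) * f (σ m) (x (t + m)) with hgdef
  have hg0 : ∀ m, 0 ≤ g m := fun m => mul_nonneg (hpstar _).le (hf0 _ _)
  have hP0 : ∀ r : ℕ, 0 ≤ ∏ m ∈ Finset.Icc 1 r, g m :=
    fun r => Finset.prod_nonneg fun m _ => hg0 m
  -- upper bound
  have hA : ∀ r : ℕ, (∀ m ∈ Finset.Icc 1 r, ∀ c : S K,
      pstar p c * f c (x (t + m)) ≤ g m) → ∀ i j : S K,
      plik p f x t r i j ≤ (∏ m ∈ Finset.Icc 1 r, g m) * pstar p j := by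
    intro r
    induction r with
    | zero =>
      intro _ i j
      simp only [plik, Finset.Icc_self]
      have : (Finset.Icc 1 0 : Finset ℕ) = ∅ := by decide
      rw [this, Finset.prod_empty, one_mul]
      exact le_smax' (fun c => p c j) i
    | succ r ih =>
      intro hobs i j
      have hobs' : ∀ m ∈ Finset.Icc 1 r, ∀ c : S K,
          pstar p c * f c (x (t + m)) ≤ g m := by
        intro m hm c
        apply hobs m _ c
        rw [Finset.mem_Icc] at hm ⊢; omega
      show smax (fun c => plik p f x t r i c * f c (x (t + r + 1)) * p c j) ≤ _
      apply smax_le'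
      intro c
      have h1 : plik p f x t r i c ≤ (∏ m ∈ Finset.Icc 1 r, g m) * pstar p c := ih hobs' i c
      have h2 : p c j ≤ pstar p j := le_smax' (fun b => p b j) c
      have h3 : pstar p c * f c (x (t + (r + 1))) ≤ g (r + 1) :=
        hobs (r + 1) (by rw [Finset.mem_Icc]; omega) c
      rw [Finset.prod_Icc_succ_top (by omega : 1 ≤ r + 1)]
      have hplik0 := plik_nonneg' p f x hp0 hf0 r t i c
      have hfc := hf0 c (x (t + r + 1))
      have hpc := hp0 c j
      have hpsj := (hpstar j).le
      have hpsc := (hpstar c).le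
      have hPr := hP0 r
      have h3' : pstar p c * f c (x (t + r + 1)) ≤ g (r + 1) := h3
      calc plik p f x t r i c * f c (x (t + r + 1)) * p c j
          ≤ ((∏ m ∈ Finset.Icc 1 r, g m) * pstar p c) * f c (x (t + r + 1)) * p c j :=
            mul_le_mul_of_nonneg_right (mul_le_mul_of_nonneg_right h1 hfc) hpc
        _ ≤ ((∏ m ∈ Finset.Icc 1 r, g m) * pstar p c) * f c (x (t + r + 1)) * pstar p j :=
            mul_le_mul_of_nonneg_left h2
              (mul_nonneg (mul_nonneg hPr hpsc) hfc)
        _ = (∏ m ∈ Finset.Icc 1 r, g m) * (pstar p c * f c (x (t + r + 1))) * pstar p j := by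
            ring
        _ ≤ (∏ m ∈ Finset.Icc 1 r, g m) * g (r + 1) * pstar p j :=
            mul_le_mul_of_nonneg_right (mul_le_mul_of_nonneg_left h3' hPr) hpsj
  -- lower bound along the cycle
  have hB : ∀ r : ℕ, (∏ m ∈ Finset.Icc 1 r, g m) * pstar p (σ (r + 1)) ≤
      plik p f x t r st1 (σ (r + 1)) := by
    intro r
    induction r with
    | zero =>
      have : (Finset.Icc 1 0 : Finset ℕ) = ∅ := by decide
      rw [this, Finset.prod_empty, one_mul]
      show pstar p (σ 1) ≤ p st1 (σ 1)
      have := hstep 0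
      rw [hσ0] at this
      rw [← this]
    | succ r ih =>
      show _ ≤ smax (fun c => plik p f x t r st1 c * f c (x (t + r + 1)) * p c (σ (r + 1 + 1)))
      refine le_trans ?_ (le_smax' _ (σ (r + 1)))
      show _ ≤ plik p f x t r st1 (σ (r + 1)) * f (σ (r + 1)) (x (t + r + 1)) * p (σ (r + 1)) (σ (r + 1 + 1))
      rw [hstep (r + 1)]
      rw [Finset.prod_Icc_succ_top (by omega : 1 ≤ r + 1)]
      have hfr := hf0 (σ (r + 1)) (x (t + r + 1))
      have hps := (hpstar (σ (r + 1 + 1))).le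
      have hgr1 : g (r + 1) = pstar p (σ (r + 1)) * f (σ (r + 1)) (x (t + r + 1)) := rfl
      rw [hgr1]
      calc (∏ m ∈ Finset.Icc 1 r, g m) *
            (pstar p (σ (r + 1)) * f (σ (r + 1)) (x (t + r + 1))) * pstar p (σ (r + 1 + 1))
          = ((∏ m ∈ Finset.Icc 1 r, g m) * pstar p (σ (r + 1))) *
              f (σ (r + 1)) (x (t + r + 1)) * pstar p (σ (r + 1 + 1)) := by ring
        _ ≤ plik p f x t r st1 (σ (r + 1)) * f (σ (r + 1)) (x (t + r + 1)) *
              pstar p (σ (r + 1 + 1)) :=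
            mul_le_mul_of_nonneg_right (mul_le_mul_of_nonneg_right ih hfr) hps
  -- assemble
  intro i j
  have hnL1 : 1 ≤ n * L := Nat.one_le_iff_ne_zero.mpr (by positivity)
  set r := n * L - 1 with hrdef
  have hr1 : r + 1 = n * L := by omega
  have hAr := hA r (fun m hm c => by
    rw [Finset.mem_Icc] at hm
    exact hobsB m hm.1 (by omega) c) i j
  have hBr := hB r
  have hσend : σ (r + 1) = st1 := by
    show s ((r + 1) % L) = st1
    rw [hr1, Nat.mul_mod_left, hs0]
  rw [hσend] at hBr
  have h2 : pstar p j * f j (x (t + n * L)) ≤ g (n * L) :=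
    hobsB (n * L) hnL1 le_rfl j
  have hgend : g (n * L) = pstar p st1 * f st1 (x (t + n * L)) := by
    show pstar p (σ (n * L)) * f (σ (n * L)) (x (t + n * L)) = _
    have : σ (n * L) = st1 := by show s (n * L % L) = st1; rw [Nat.mul_mod_left, hs0]
    rw [this]
  rw [hgend] at h2
  have hfj := hf0 j (x (t + n * L))
  have hf1 := hf0 st1 (x (t + n * L))
  have hPr := hP0 r
  nlinarith [mul_le_mul_of_nonneg_right hAr hfj,
    mul_le_mul_of_nonneg_right hBr hf1,
    mul_le_mul_of_nonneg_left h2 hPr]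

end ViterbiHMM
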